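/- If I is a set of morphisms in a category C, then a morphism q has the right lifting property with respect to every retract of a transfinite composition of pushouts of morphisms of I if and only if q has the right lifting property with respect to I. -/

import Mathlib

/-!
Right lifting against a class is inherited by its pushouts, by transfinite compositions of its
members (lifts are built stage by stage, using the lifting property at successor steps and
continuity of the chain at limit steps) and by retracts, so the right class of the retract
closure of `cell I` is `inj I`; the converse inclusion holds because every `g ∈ I` is a
one-step transfinite composition of pushouts of `I`. Mathlib proves these facts for
`transfiniteCompositions (pushouts I)`, which is `cell I` once the chains are matched.
-/

universe w v u

open CategoryTheory CategoryTheory.Limits Opposite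

namespace Paper

variable {C : Type u} [Category.{v} C]

/-- `g` is a retract of `f` in the arrow category. -/
def IsRetractOfArrow {X Y A B : C} (g : X ⟶ Y) (f : A ⟶ B) : Prop :=
  ∃ (i : X ⟶ A) (r : A ⟶ X) (i' : Y ⟶ B) (r' : B ⟶ Y),
    i ≫ r = 𝟙 X ∧ i' ≫ r' = 𝟙 Y ∧ i ≫ f = g ≫ i' ∧ r ≫ g = f ≫ r'

/-- `f` is a pushout of some morphism belonging to `I`. -/
def IsPushoutOfElem (I : MorphismProperty C) {X Y : C} (f : X ⟶ Y) : Prop :=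
  ∃ (A B : C) (g : A ⟶ B) (h : A ⟶ X) (k : B ⟶ Y), I g ∧ IsPushout g h k f

/-- The inclusion of the interval `[⊥, j)` into a preorder. -/
def ltInclusion {J : Type w} [Preorder J] (j : J) : Set.Iio j ⥤ J :=
  (show Monotone (fun k : Set.Iio j => (k : J)) from fun _ _ h => h).functor

/-- The canonical cocone on the restriction of `F` to `[⊥, j)`, with vertex `F.obj j`. -/
@[simps]
def coconeLT {J : Type w} [Preorder J] (F : J ⥤ C) (j : J) :
    Limits.Cocone (ltInclusion j ⋙ F) where
  pt := F.obj j
  ι :=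
    { app := fun k => F.map (homOfLE (le_of_lt k.2))
      naturality := fun k l h => by
        dsimp [ltInclusion]
        rw [Category.comp_id]
        exact (F.map_comp _ _).symm.trans (congrArg F.map (Subsingleton.elim _ _)) }

/-- A witness that `f` is a transfinite composition of pushouts of morphisms of `I`:
a colimit-preserving well-ordered chain starting at the source of `f`, each successor
step of which is a pushout of a morphism of `I`, whose composition is `f`. -/
structure TransfiniteCompositionWitness (I : MorphismProperty C) {X Y : C} (f : X ⟶ Y) where
  J : Type v
  [linOrd : LinearOrder J]
  [orderBot : OrderBot J]
  [succOrder : SuccOrder J]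
  [wellFounded : WellFoundedLT J]
  F : J ⥤ C
  c : Limits.Cocone F
  isColimit : Limits.IsColimit c
  isoBot : X ≅ F.obj ⊥
  isoPt : c.pt ≅ Y
  fac : f = isoBot.hom ≫ c.ι.app ⊥ ≫ isoPt.hom
  succ : ∀ j : J, ¬ IsMax j → IsPushoutOfElem I (F.map (homOfLE (Order.le_succ j)))
  limit : ∀ j : J, Order.IsSuccLimit j → Nonempty (Limits.IsColimit (coconeLT F j))

/-- `cell I`: the class of transfinite compositions of pushouts of morphisms of `I`. -/
def transfiniteCell (I : MorphismProperty C) : MorphismProperty C :=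
  fun _ _ f => Nonempty (TransfiniteCompositionWitness I f)

/-- `inj I`: the class of morphisms with the right lifting property with respect to `I`. -/
def injClass (I : MorphismProperty C) : MorphismProperty C :=
  fun _ _ q => ∀ ⦃A B : C⦄ (g : A ⟶ B), I g → HasLiftingProperty g q

/-- `cof I`: the class of morphisms with the left lifting property with respect to `inj I`. -/
def cofClass (I : MorphismProperty C) : MorphismProperty C :=
  fun _ _ f => ∀ ⦃X Y : C⦄ (q : X ⟶ Y), injClass I q → HasLiftingProperty f q

open MorphismProperty

lemma isRetractOfArrow_iff_nonempty_retractArrow {X Y A B : C} (g : X ⟶ Y) (f : A ⟶ B) :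
    IsRetractOfArrow g f ↔ Nonempty (RetractArrow g f) := by
  constructor
  · rintro ⟨i, r, i', r', hi, hi', w, w'⟩
    exact ⟨{ i := Arrow.homMk' i i' w
             r := Arrow.homMk' r r' w'
             retract := by ext <;> assumption }⟩
  · rintro ⟨h⟩
    exact ⟨h.i.left, h.r.left, h.i.right, h.r.right, h.retract_left, h.retract_right,
      h.i_w, h.r_w⟩

lemma isPushoutOfElem_iff_pushouts (I : MorphismProperty C) {X Y : C} (f : X ⟶ Y) :
    IsPushoutOfElem I f ↔ I.pushouts f := by
  constructor
  · rintro ⟨A, B, g, h, k, hg, sq⟩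
    exact I.pushouts_mk sq.flip hg
  · rintro ⟨A, B, g, h, k, hg, sq⟩
    exact ⟨A, B, g, h, k, hg, sq.flip⟩

namespace TransfiniteCompositionWitness

variable {I : MorphismProperty C} {X Y : C} {f : X ⟶ Y} (w : TransfiniteCompositionWitness I f)

attribute [local instance] linOrd orderBot succOrder wellFounded

def toTransfiniteCompositionOfShape : I.pushouts.TransfiniteCompositionOfShape w.J f :=
  TransfiniteCompositionOfShape.ofArrowIso
    { F := w.F
      isoBot := Iso.refl _
      isWellOrderContinuous := ⟨w.limit⟩
      incl := w.c.ι
      isColimit := w.isColimit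
      map_mem j hj := (isPushoutOfElem_iff_pushouts I _).1 (w.succ j hj) }
    (Arrow.isoMk w.isoBot.symm w.isoPt (by simp [w.fac]))

def ofTransfiniteCompositionOfShape {J : Type v} [LinearOrder J] [OrderBot J] [SuccOrder J]
    [WellFoundedLT J] (h : I.pushouts.TransfiniteCompositionOfShape J f) :
    TransfiniteCompositionWitness I f where
  J := J
  F := h.F
  c := Cocone.mk Y h.incl
  isColimit := h.isColimit
  isoBot := h.isoBot.symm
  isoPt := Iso.refl Y
  fac := by simp [h.fac]
  succ j hj := (isPushoutOfElem_iff_pushouts I _).2 (h.map_mem j hj)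
  limit j hj := h.isWellOrderContinuous.nonempty_isColimit j hj

end TransfiniteCompositionWitness

lemma transfiniteCell_eq_transfiniteCompositions (I : MorphismProperty C) :
    transfiniteCell I = transfiniteCompositions.{v} I.pushouts := by
  ext X Y f
  rw [transfiniteCompositions_iff]
  constructor
  · rintro ⟨w⟩
    exact ⟨w.J, _, _, _, _, ⟨w.toTransfiniteCompositionOfShape⟩⟩
  · rintro ⟨J, _, _, _, _, ⟨h⟩⟩
    exact ⟨.ofTransfiniteCompositionOfShape h⟩

lemma rlp_transfiniteCompositions (W : MorphismProperty C) :
    (transfiniteCompositions.{w} W).rlp = W.rlp :=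
  le_antisymm (antitone_rlp (le_transfiniteCompositions W))
    ((le_llp_iff_le_rlp _ _).1 (transfiniteCompositions_le_llp_rlp W))

lemma rlp_retracts_transfiniteCell (I : MorphismProperty C) :
    (transfiniteCell I).retracts.rlp = I.rlp := by
  rw [rlp_retracts, transfiniteCell_eq_transfiniteCompositions, rlp_transfiniteCompositions,
    rlp_pushouts]

theorem statement0_general (I : MorphismProperty C) {X Y : C} (q : X ⟶ Y) :
    (∀ {A B A' B' : C} (f : A ⟶ B) (g : A' ⟶ B'),
        Nonempty (TransfiniteCompositionWitness I f) → IsRetractOfArrow g f →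
          HasLiftingProperty g q) ↔
      (∀ {A B : C} (g : A ⟶ B), I g → HasLiftingProperty g q) := by
  change _ ↔ I.rlp q
  rw [← rlp_retracts_transfiniteCell]
  constructor
  · rintro h A' B' g ⟨A, B, f, r, hf⟩
    exact h f g hf ((isRetractOfArrow_iff_nonempty_retractArrow g f).2 ⟨r⟩)
  · intro h A B A' B' f g hf hr
    exact h g ⟨A, B, f, ((isRetractOfArrow_iff_nonempty_retractArrow g f).1 hr).some, hf⟩

/-- In a cocomplete category `C`, a morphism `q` has the right lifting
property with respect to every retract of a transfinite composition of pushouts of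
morphisms of `I` if and only if `q` has the right lifting property with respect to `I`. -/
theorem statement0 [HasColimits C] (I : MorphismProperty C) {X Y : C} (q : X ⟶ Y) :
    (∀ {A B A' B' : C} (f : A ⟶ B) (g : A' ⟶ B'),
        Nonempty (TransfiniteCompositionWitness I f) → IsRetractOfArrow g f →
          HasLiftingProperty g q) ↔
      (∀ {A B : C} (g : A ⟶ B), I g → HasLiftingProperty g q) :=
  statement0_general I q

end Paper
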